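/- arXiv:1005.2988 — 2 statements merged into one kernel-verified Lean document; each statement's English description precedes it below -/
import Mathlib

section
/- Let T(t) be a hypercyclic strongly continuous semigroup on a Banach space B with generator A. Then the dual (adjoint) operator A' has empty point spectrum: there is no nonzero φ ∈ B' and λ ∈ ℂ with A'φ = λφ. -/
/-
If `A'φ = λφ` and `f` is hypercyclic, then `g(t) = φ(T(t) f)` satisfies `g(s) - g(0) = λ ∫₀ˢ g`,
because `∫₀ˢ T(r) f dr` lies in the domain of `A` and is mapped to `T(s) f - f`. Hence
`g(t) = e^{λt} φ(f)`, and `{e^{λt} c : t ≥ 0}` is either bounded or misses the open disc of radius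
`|c|`, so it is not dense. But a nonzero functional is surjective and hence maps the dense orbit
onto a dense subset of `ℂ`.
-/

open Filter Topology Set intervalIntegral
open scoped NNReal

section Orbit

variable {B : Type*} [NormedAddCommGroup B] [NormedSpace ℂ B] (T : ℝ≥0 → B →L[ℂ] B) (f : B)

/-- The orbit `t ↦ T t f`, extended by `T 0 f` to negative times so that it can be integrated over
real intervals. -/
def realOrbit (r : ℝ) : B := T r.toNNReal f

variable {T}

theorem continuous_realOrbit (hTcont : ∀ f : B, Continuous fun t : ℝ≥0 => T t f) :
    Continuous (realOrbit T f) :=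
  (hTcont f).comp continuous_real_toNNReal

theorem realOrbit_coe (t : ℝ≥0) : realOrbit T f t = T t f := by
  simp [realOrbit]

theorem realOrbit_zero (hT0 : T 0 = ContinuousLinearMap.id ℂ B) : realOrbit T f 0 = f := by
  simp [realOrbit, hT0]

theorem apply_realOrbit (hTadd : ∀ s t : ℝ≥0, T (s + t) = (T s).comp (T t))
    {r : ℝ} (hr : 0 ≤ r) (t : ℝ≥0) : T t (realOrbit T f r) = realOrbit T f (r + t) := by
  simp only [realOrbit, Real.toNNReal_add hr t.coe_nonneg, Real.toNNReal_coe, add_comm _ t, hTadd]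
  rfl

end Orbit

theorem tendsto_inv_smul_integral_add {E : Type*} [NormedAddCommGroup E] [NormedSpace ℝ E]
    [CompleteSpace E] {u : ℝ → E} (hu : Continuous u) (s : ℝ) :
    Tendsto (fun x : ℝ => x⁻¹ • ∫ r in s..s + x, u r) (𝓝[>] 0) (𝓝 (u s)) := by
  have := (integral_hasDerivAt_right (hu.intervalIntegrable s s)
    (hu.stronglyMeasurableAtFilter _ _) hu.continuousAt).tendsto_slope_zero_right
  simpa only [integral_same, sub_zero] using this

theorem NNReal.tendsto_coe_nhdsGT_zero :
    Tendsto (fun t : ℝ≥0 => (t : ℝ)) (𝓝[>] 0) (𝓝[>] 0) :=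
  (NNReal.map_coe_nhdsGT 0).le

section Generator

variable {B : Type*} [NormedAddCommGroup B] [NormedSpace ℂ B] [CompleteSpace B]
  {T : ℝ≥0 → B →L[ℂ] B} (f : B) {s : ℝ}

theorem apply_integral_realOrbit_sub (hTadd : ∀ s t : ℝ≥0, T (s + t) = (T s).comp (T t))
    (hTcont : ∀ f : B, Continuous fun t : ℝ≥0 => T t f) (hs : 0 ≤ s) (t : ℝ≥0) :
    T t (∫ r in 0..s, realOrbit T f r) - ∫ r in 0..s, realOrbit T f r =
      (∫ r in s..s + t, realOrbit T f r) - ∫ r in 0..t, realOrbit T f r := by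
  have hint := (continuous_realOrbit f hTcont).intervalIntegrable (μ := MeasureTheory.volume)
  have hshift : T t (∫ r in 0..s, realOrbit T f r) = ∫ r in t..s + t, realOrbit T f r :=
    calc T t (∫ r in 0..s, realOrbit T f r)
        _ = ∫ r in 0..s, realOrbit T f (r + t) := by
          rw [← (T t).intervalIntegral_comp_comm (hint 0 s)]
          refine integral_congr fun r hr => ?_
          rw [uIcc_of_le hs] at hr
          exact apply_realOrbit f hTadd hr.1 t
        _ = ∫ r in t..s + t, realOrbit T f r := by rw [integral_comp_add_right, zero_add]
  rw [hshift, sub_eq_sub_iff_add_eq_add, add_comm (∫ r in (t : ℝ)..s + t, _),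
    add_comm (∫ r in s..s + t, _), integral_add_adjacent_intervals (hint _ _) (hint _ _),
    integral_add_adjacent_intervals (hint _ _) (hint _ _)]

theorem tendsto_generator_integral_realOrbit (hT0 : T 0 = ContinuousLinearMap.id ℂ B)
    (hTadd : ∀ s t : ℝ≥0, T (s + t) = (T s).comp (T t))
    (hTcont : ∀ f : B, Continuous fun t : ℝ≥0 => T t f) (hs : 0 ≤ s) :
    Tendsto (fun t : ℝ≥0 => (t : ℝ)⁻¹ •
        (T t (∫ r in 0..s, realOrbit T f r) - ∫ r in 0..s, realOrbit T f r))
      (𝓝[>] 0) (𝓝 (realOrbit T f s - f)) := by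
  have hcont := continuous_realOrbit f hTcont
  have hquot := (tendsto_inv_smul_integral_add hcont s).sub
    (tendsto_inv_smul_integral_add hcont 0)
  simp only [zero_add, realOrbit_zero f hT0, ← smul_sub] at hquot
  refine (hquot.comp NNReal.tendsto_coe_nhdsGT_zero).congr fun t => ?_
  simp only [Function.comp, apply_integral_realOrbit_sub f hTadd hTcont hs]

end Generator

section LinearODE

variable {g : ℝ → ℂ} {lam : ℂ}

theorem hasDerivWithinAt_Ici_of_sub_eq_integral (hg : Continuous g)
    (h : ∀ s, 0 ≤ s → g s - g 0 = lam * ∫ r in 0..s, g r) {s : ℝ} (hs : 0 ≤ s) :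
    HasDerivWithinAt g (lam * g s) (Ici s) s := by
  have hU : HasDerivAt (fun x => g 0 + lam * ∫ r in 0..x, g r) (lam * g s) s :=
    ((integral_hasDerivAt_right (hg.intervalIntegrable 0 s)
      (hg.stronglyMeasurableAtFilter _ _) hg.continuousAt).const_mul lam).const_add (g 0)
  exact hU.hasDerivWithinAt.congr (fun x hx => eq_add_of_sub_eq' (h x (hs.trans hx)))
    (eq_add_of_sub_eq' (h s hs))

theorem eq_cexp_mul_of_hasDerivWithinAt (hg : ContinuousOn g (Ici 0))
    (hderiv : ∀ s, 0 ≤ s → HasDerivWithinAt g (lam * g s) (Ici s) s) {s : ℝ} (hs : 0 ≤ s) :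
    g s = Complex.exp (lam * s) * g 0 := by
  set w : ℝ → ℂ := fun x => Complex.exp (-lam * x) * g x
  have hexp (x : ℝ) :
      HasDerivAt (fun x : ℝ => Complex.exp (-lam * x)) (Complex.exp (-lam * x) * -lam) x := by
    simpa using ((hasDerivAt_id x).ofReal_comp.const_mul (-lam)).cexp
  have hw_deriv : ∀ x ∈ Ico 0 s, HasDerivWithinAt w 0 (Ici x) x := fun x hx =>
    ((hexp x).hasDerivWithinAt.mul (hderiv x hx.1)).congr_deriv (by ring)
  have hw_cont : ContinuousOn w (Icc 0 s) :=
    ((Continuous.cexp (by fun_prop)).continuousOn.mul hg).mono Icc_subset_Ici_self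
  have hw : w s = g 0 := by
    simpa [w] using constant_of_has_deriv_right_zero hw_cont hw_deriv s ⟨hs, le_rfl⟩
  calc g s = Complex.exp (lam * s) * w s := by simp [w, ← mul_assoc, ← Complex.exp_add]
    _ = Complex.exp (lam * s) * g 0 := by rw [hw]

end LinearODE

theorem not_denseRange_cexp_mul (lam c : ℂ) :
    ¬ DenseRange fun t : ℝ≥0 => Complex.exp (lam * t) * c := by
  intro hdense
  have hnorm (t : ℝ≥0) : ‖Complex.exp (lam * t) * c‖ = Real.exp (lam.re * t) * ‖c‖ := by
    simp [Complex.norm_exp]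
  by_cases hbdd : lam.re ≤ 0 ∨ c = 0
  · have hbdd : Bornology.IsBounded (range fun t : ℝ≥0 => Complex.exp (lam * t) * c) := by
      refine (Metric.isBounded_closedBall (x := 0) (r := ‖c‖)).subset ?_
      rintro _ ⟨t, rfl⟩
      rw [mem_closedBall_zero_iff, hnorm]
      rcases hbdd with hre | rfl
      · exact mul_le_of_le_one_left (norm_nonneg c)
          (Real.exp_le_one_iff.mpr (mul_nonpos_of_nonpos_of_nonneg hre t.coe_nonneg))
      · simp
    exact NormedSpace.unbounded_univ ℝ ℂ (hdense.closure_eq ▸ hbdd.closure)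
  · rw [not_or, not_le] at hbdd
    obtain ⟨t, ht⟩ := hdense.exists_mem_open (Metric.isOpen_ball (x := 0))
      (Metric.nonempty_ball.mpr (norm_pos_iff.mpr hbdd.2))
    rw [mem_ball_zero_iff, hnorm] at ht
    exact ht.not_ge (le_mul_of_one_le_left (norm_nonneg c)
      (Real.one_le_exp (mul_nonneg hbdd.1.le t.coe_nonneg)))

/-- If `T(t)` is a hypercyclic strongly continuous semigroup on a Banach space `B` with
generator `A` (with domain `domA`, characterized by convergence of the difference quotients),
then the dual operator `A'` has empty point spectrum: there is no nonzero continuous linear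
functional `φ` and `λ ∈ ℂ` with `A'φ = λφ`, i.e. with `φ(Af) = λ·φ(f)` for all `f ∈ dom(A)`. -/
theorem adjoint_generator_empty_point_spectrum_of_hypercyclic
    {B : Type*} [NormedAddCommGroup B] [NormedSpace ℂ B] [CompleteSpace B]
    (T : ℝ≥0 → B →L[ℂ] B)
    (hT0 : T 0 = ContinuousLinearMap.id ℂ B)
    (hTadd : ∀ s t : ℝ≥0, T (s + t) = (T s).comp (T t))
    (hTcont : ∀ f : B, Continuous fun t : ℝ≥0 => T t f)
    (domA : Set B) (A : B → B)
    (hdom : ∀ f : B, f ∈ domA ↔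
      ∃ g : B, Tendsto (fun t : ℝ≥0 => ((t : ℝ))⁻¹ • (T t f - f)) (𝓝[>] 0) (𝓝 g))
    (hA : ∀ f ∈ domA,
      Tendsto (fun t : ℝ≥0 => ((t : ℝ))⁻¹ • (T t f - f)) (𝓝[>] 0) (𝓝 (A f)))
    (hhyp : ∃ f : B, Dense (Set.range fun t : ℝ≥0 => T t f)) :
    ¬ ∃ (φ : B →L[ℂ] ℂ) (lam : ℂ), φ ≠ 0 ∧ ∀ f ∈ domA, φ (A f) = lam * φ f := by
  rintro ⟨φ, lam, hφ, heig⟩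
  obtain ⟨f, hf⟩ := hhyp
  have hcont := continuous_realOrbit f hTcont
  set g : ℝ → ℂ := fun r => φ (realOrbit T f r)
  have hg : Continuous g := φ.continuous.comp hcont
  have hg_integral (s : ℝ) (hs : 0 ≤ s) : g s - g 0 = lam * ∫ r in 0..s, g r := by
    have hgen := tendsto_generator_integral_realOrbit f hT0 hTadd hTcont hs
    have hmem := (hdom _).mpr ⟨_, hgen⟩
    simp only [g]
    rw [φ.intervalIntegral_comp_comm (hcont.intervalIntegrable 0 s), ← heig _ hmem,
      tendsto_nhds_unique (hA _ hmem) hgen, map_sub, realOrbit_zero f hT0]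
  have hg_exp (t : ℝ≥0) : φ (T t f) = Complex.exp (lam * t) * φ f := by
    simpa [g, realOrbit_coe, realOrbit_zero f hT0] using
      eq_cexp_mul_of_hasDerivWithinAt hg.continuousOn
        (fun s hs => hasDerivWithinAt_Ici_of_sub_eq_integral hg hg_integral hs) t.coe_nonneg
  have hsurj : Function.Surjective φ :=
    LinearMap.surjective_of_ne_zero fun h => hφ (ContinuousLinearMap.coe_injective h)
  refine not_denseRange_cexp_mul lam (φ f) ?_
  simpa only [Function.comp_def, hg_exp] using hsurj.denseRange.comp hf φ.continuous
end

section
/- Fix ρ > 0 and p ∈ (1, ∞). Every point of the parabolic region P_p = { ρ² − z² : z ∈ ℂ, |Re z| ≤ ρ·|2/p − 1| } lies in the closed sector Σ_p = { w ∈ ℂ \ {0} : |arg w| ≤ arctan(|p−2| / (2√(p−1))) } ∪ {0}; moreover the boundary parabola of P_p is tangent to the boundary rays of Σ_p. -/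
/-- The parabolic region `P_p = {ρ² − z² : z ∈ ℂ, |Re z| ≤ ρ|2/p − 1|}`. -/
def parabolicRegion (ρ p : ℝ) : Set ℂ :=
  {w : ℂ | ∃ z : ℂ, |z.re| ≤ ρ * |2 / p - 1| ∧ w = (ρ : ℂ) ^ 2 - z ^ 2}

/-!
Write `c = |2/p − 1|` and `t = |p − 2| / (2√(p − 1))`; the identity `c²(1 + t²) = t²` is the only
place where `p` enters. For `w = ρ² − z²` with `z = x + iy` and `|x| ≤ ρc` we have
`Re w = (ρ² − x²) + y²`, `Im w = −2xy` and `x² ≤ t²(ρ² − x²)`, so AM-GM gives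
`|Im w| ≤ 2t|y|√(ρ² − x²) ≤ t Re w`: the region lies in the cone `|Im w| ≤ t Re w`.
Equality in both steps, `x = ρc` and `y² = ρ² − x²`, gives a point of the boundary parabola
on the boundary ray of the cone.
-/

lemma Real.abs_arctan (u : ℝ) : |Real.arctan u| = Real.arctan |u| := by
  rcases le_total 0 u with hu | hu
  · rw [abs_of_nonneg hu, abs_of_nonneg (Real.arctan_nonneg.mpr hu)]
  · rw [abs_of_nonpos hu, abs_of_nonpos (Real.arctan_le_zero.mpr hu), Real.arctan_neg]

namespace Complex

lemma abs_arg_eq_arctan_of_re_pos {w : ℂ} (h : 0 < w.re) :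
    |arg w| = Real.arctan (|w.im| / w.re) := by
  have harg : arg w = Real.arctan (w.im / w.re) := by
    rw [← tan_arg, Real.arctan_tan (neg_pi_div_two_lt_arg_iff.mpr (Or.inl h))
      (arg_lt_pi_div_two_iff.mpr (Or.inl h))]
  rw [harg, Real.abs_arctan, abs_div, abs_of_pos h]

lemma abs_arg_le_arctan_of_abs_im_le {w : ℂ} {t : ℝ} (hre : 0 < w.re)
    (him : |w.im| ≤ t * w.re) : |arg w| ≤ Real.arctan t := by
  rw [abs_arg_eq_arctan_of_re_pos hre]
  exact Real.arctan_mono ((div_le_iff₀ hre).mpr him)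

lemma abs_arg_eq_arctan_of_abs_im_eq {w : ℂ} {t : ℝ} (hre : 0 < w.re)
    (him : |w.im| = t * w.re) : |arg w| = Real.arctan t := by
  rw [abs_arg_eq_arctan_of_re_pos hre, him, mul_div_cancel_right₀ t hre.ne']

/-- Moving down from a point of the lower boundary ray of the cone `|Im w| ≤ t Re w` leaves
the cone, so such a point is never interior to a subset of the cone. -/
lemma mem_frontier_of_abs_im_eq {S : Set ℂ} {t : ℝ} {w : ℂ}
    (hS : S ⊆ {v | |v.im| ≤ t * v.re}) (hw : w ∈ S) (him : w.im ≤ 0)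
    (heq : |w.im| = t * w.re) : w ∈ frontier S := by
  refine ⟨subset_closure hw, fun hint => ?_⟩
  have hlim : Filter.Tendsto (fun δ : ℝ => w - δ * I) (nhdsWithin 0 (Set.Ioi 0)) (nhds w) := by
    have : Continuous (fun δ : ℝ => w - δ * I) := by fun_prop
    simpa using (this.tendsto 0).mono_left nhdsWithin_le_nhds
  obtain ⟨δ, hδS, hδ : 0 < δ⟩ :=
    ((hlim.eventually_mem (mem_interior_iff_mem_nhds.mp hint)).and self_mem_nhdsWithin).exists
  have hcone : |w.im - δ| ≤ t * w.re := by simpa using hS hδS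
  rw [abs_of_nonpos him] at heq
  rw [abs_of_nonpos (by linarith)] at hcone
  linarith

section SquareDifference

variable {t ρ : ℝ} {z : ℂ}

lemma re_ofReal_sq_sub_sq : ((ρ : ℂ) ^ 2 - z ^ 2).re = (ρ ^ 2 - z.re ^ 2) + z.im ^ 2 := by
  simp only [sub_re, pow_two, mul_re, ofReal_re, ofReal_im]
  ring

lemma im_ofReal_sq_sub_sq : ((ρ : ℂ) ^ 2 - z ^ 2).im = -(2 * z.re * z.im) := by
  simp only [sub_im, pow_two, mul_im, ofReal_re, ofReal_im]
  ring

lemma sq_le_one_add_sq_mul_sub_sq (hz : z.re ^ 2 * (1 + t ^ 2) ≤ t ^ 2 * ρ ^ 2) :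
    ρ ^ 2 ≤ (1 + t ^ 2) * (ρ ^ 2 - z.re ^ 2) := by
  linarith

lemma re_ofReal_sq_sub_sq_pos (hρ : ρ ≠ 0) (hz : z.re ^ 2 * (1 + t ^ 2) ≤ t ^ 2 * ρ ^ 2) :
    0 < ((ρ : ℂ) ^ 2 - z ^ 2).re := by
  have h := sq_le_one_add_sq_mul_sub_sq hz
  have hρ2 : 0 < ρ ^ 2 := by positivity
  rw [re_ofReal_sq_sub_sq]
  nlinarith [sq_nonneg z.im, sq_nonneg t]

lemma abs_im_ofReal_sq_sub_sq_le (ht : 0 ≤ t) (hz : z.re ^ 2 * (1 + t ^ 2) ≤ t ^ 2 * ρ ^ 2) :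
    |((ρ : ℂ) ^ 2 - z ^ 2).im| ≤ t * ((ρ : ℂ) ^ 2 - z ^ 2).re := by
  have hA : 0 ≤ ρ ^ 2 - z.re ^ 2 := by
    nlinarith [sq_le_one_add_sq_mul_sub_sq hz, sq_nonneg ρ, sq_nonneg t]
  have hx : z.re ^ 2 ≤ t ^ 2 * (ρ ^ 2 - z.re ^ 2) := by linarith
  rw [re_ofReal_sq_sub_sq, im_ofReal_sq_sub_sq]
  refine abs_le_of_sq_le_sq ?_ (by positivity)
  -- AM-GM: `4 A y² ≤ (A + y²)²` with `A = ρ² − x²`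
  nlinarith [mul_le_mul_of_nonneg_right hx (sq_nonneg z.im),
    mul_nonneg (sq_nonneg t) (sq_nonneg (ρ ^ 2 - z.re ^ 2 - z.im ^ 2))]

end SquareDifference

end Complex

noncomputable def sectorSlope (p : ℝ) : ℝ := |p - 2| / (2 * Real.sqrt (p - 1))

lemma sectorSlope_nonneg (p : ℝ) : 0 ≤ sectorSlope p := by
  unfold sectorSlope
  positivity

lemma sq_abs_two_div_sub_one_mul_one_add_sq_sectorSlope {p : ℝ} (hp : 1 < p) :
    |2 / p - 1| ^ 2 * (1 + sectorSlope p ^ 2) = sectorSlope p ^ 2 := by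
  have hp1 : 0 < p - 1 := by linarith
  unfold sectorSlope
  rw [sq_abs, div_pow, mul_pow, sq_abs, Real.sq_sqrt hp1.le]
  field_simp
  ring

section ParabolicRegion

variable {ρ p : ℝ}

lemma sq_re_mul_one_add_sq_sectorSlope_le (hp : 1 < p) {z : ℂ} (hz : |z.re| ≤ ρ * |2 / p - 1|) :
    z.re ^ 2 * (1 + sectorSlope p ^ 2) ≤ sectorSlope p ^ 2 * ρ ^ 2 := by
  have hsq : z.re ^ 2 ≤ ρ ^ 2 * |2 / p - 1| ^ 2 := by
    rw [← mul_pow, ← sq_abs z.re]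
    exact pow_le_pow_left₀ (abs_nonneg _) hz 2
  calc z.re ^ 2 * (1 + sectorSlope p ^ 2)
      ≤ ρ ^ 2 * |2 / p - 1| ^ 2 * (1 + sectorSlope p ^ 2) := by gcongr
    _ = sectorSlope p ^ 2 * ρ ^ 2 := by
      rw [mul_assoc, sq_abs_two_div_sub_one_mul_one_add_sq_sectorSlope hp, mul_comm]

lemma parabolicRegion_subset_cone (hρ : ρ ≠ 0) (hp : 1 < p) :
    parabolicRegion ρ p ⊆ {w | 0 < w.re ∧ |w.im| ≤ sectorSlope p * w.re} := by
  rintro _ ⟨z, hz, rfl⟩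
  have hz' := sq_re_mul_one_add_sq_sectorSlope_le hp hz
  exact ⟨Complex.re_ofReal_sq_sub_sq_pos hρ hz',
    Complex.abs_im_ofReal_sq_sub_sq_le (sectorSlope_nonneg p) hz'⟩

/-- The point of tangency: `z = ρ(c + is)` with `c = |2/p − 1|` and `s = √(1 − c²)`. -/
lemma exists_mem_parabolicRegion_abs_im_eq (hρ : 0 ≤ ρ) (hp : 1 < p) :
    ∃ w ∈ parabolicRegion ρ p, w.im ≤ 0 ∧ |w.im| = sectorSlope p * w.re := by
  set c := |2 / p - 1|
  set t := sectorSlope p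
  set s := Real.sqrt (1 - c ^ 2)
  have hct : c ^ 2 * (1 + t ^ 2) = t ^ 2 := sq_abs_two_div_sub_one_mul_one_add_sq_sectorSlope hp
  have hs : s ^ 2 = 1 - c ^ 2 := Real.sq_sqrt (by nlinarith [sq_nonneg c, sq_nonneg t])
  have hc : c = t * s := by
    refine (pow_left_inj₀ (abs_nonneg _) (mul_nonneg (sectorSlope_nonneg p)
      (Real.sqrt_nonneg _)) two_ne_zero).mp ?_
    rw [mul_pow, hs]
    linarith
  have hc0 : 0 ≤ c := abs_nonneg _
  set z : ℂ := ⟨ρ * c, ρ * s⟩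
  have hre : ((ρ : ℂ) ^ 2 - z ^ 2).re = 2 * ρ ^ 2 * s ^ 2 := by
    rw [Complex.re_ofReal_sq_sub_sq]
    simp only [z]
    linear_combination -ρ ^ 2 * hs
  refine ⟨(ρ : ℂ) ^ 2 - z ^ 2, ⟨z, ?_, rfl⟩, ?_, ?_⟩
  · exact (abs_of_nonneg (mul_nonneg hρ hc0)).le
  · rw [Complex.im_ofReal_sq_sub_sq, neg_nonpos]
    simp only [z]
    positivity
  · rw [hre, Complex.im_ofReal_sq_sub_sq, abs_neg]
    simp only [z]
    rw [abs_of_nonneg (by positivity), hc]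
    ring

end ParabolicRegion

/-- For `ρ > 0` and `p ∈ (1,∞)`, the parabolic region `P_p` is contained in the closed sector
`Σ_p = {w ≠ 0 : |arg w| ≤ arctan(|p−2|/(2√(p−1)))} ∪ {0}`, and the boundary parabola of `P_p`
is tangent to the boundary rays of `Σ_p`: some nonzero boundary point of `P_p` has argument of
absolute value exactly `arctan(|p−2|/(2√(p−1)))`. -/
theorem parabolic_region_subset_sector_and_tangent
    (ρ p : ℝ) (hρ : 0 < ρ) (hp : 1 < p) :
    parabolicRegion ρ p ⊆
      {w : ℂ | w = 0 ∨ |Complex.arg w| ≤ Real.arctan (|p - 2| / (2 * Real.sqrt (p - 1)))} ∧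
    ∃ w ∈ frontier (parabolicRegion ρ p), w ≠ 0 ∧
      |Complex.arg w| = Real.arctan (|p - 2| / (2 * Real.sqrt (p - 1))) := by
  have hcone := parabolicRegion_subset_cone hρ.ne' hp
  refine ⟨fun w hw => Or.inr ?_, ?_⟩
  · exact Complex.abs_arg_le_arctan_of_abs_im_le (hcone hw).1 (hcone hw).2
  · obtain ⟨w, hw, him, heq⟩ := exists_mem_parabolicRegion_abs_im_eq hρ.le hp
    have hre : 0 < w.re := (hcone hw).1
    refine ⟨w, Complex.mem_frontier_of_abs_im_eq (fun v hv => (hcone hv).2) hw him heq,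
      fun h => by simp [h] at hre, Complex.abs_arg_eq_arctan_of_abs_im_eq hre heq⟩
end
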